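/- arXiv:1104.0413 — 3 statements merged into one kernel-verified Lean document; each statement's English description precedes it below -/
import Mathlib

section
/- Let K be a field of characteristic p > 0, and let a, b ∈ K with a ≠ 0. Then the Galois group of the splitting field of the polynomial T^p + a·T − b over K is a solvable group. -/
/-!
In characteristic `p` the map `x ↦ x ^ p + a x` is additive, so the roots of `T ^ p + a T - b`
form a coset of its kernel. The polynomial is separable of degree `p`, hence for two distinct roots
`α` and `α + c` the roots are exactly `α + i c` with `i ∈ 𝔽_p`. A Galois automorphism then acts as
`α + i c ↦ α + (t + u i) c` for some `t, u ∈ 𝔽_p`, so the Galois group embeds in the affine group of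
a line: `σ ↦ σ c / c` is a homomorphism to an abelian group whose kernel embeds in the additive
group of the splitting field via `σ ↦ σ α - α`.
-/

open Polynomial

section AffineAction

variable {G L : Type*} [Group G] [Field L] [MulSemiringAction G L]

theorem isSolvable_of_smul_eq_affine {α c : L} (hc : c ≠ 0)
    (hc_smul : ∀ g : G, ∃ u ∈ MulAction.fixedPoints G L, g • c = u * c)
    (hα_smul : ∀ g : G, ∃ t ∈ MulAction.fixedPoints G L, g • α = α + t * c)
    (h_faithful : ∀ g : G, g • α = α → g • c = c → g = 1) : Group.IsSolvable G := by
  let χ : G →* Lˣ := MonoidHom.mk'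
    (fun g => Units.mk0 (g • c / c) (div_ne_zero ((smul_ne_zero_iff_ne g).2 hc) hc)) fun g h => by
      obtain ⟨u, hu, hhc⟩ := hc_smul h
      ext
      simp only [Units.val_mul, Units.val_mk0, mul_smul, hhc, smul_mul', hu g]
      field_simp
  have mem_ker : ∀ g, g ∈ χ.ker ↔ g • c = c := fun g => by
    rw [MonoidHom.mem_ker, Units.ext_iff, Units.val_one]
    exact div_eq_one_iff_eq hc
  let δ : χ.ker →* Multiplicative L := MonoidHom.mk'
    (fun g => .ofAdd ((g : G) • α - α)) fun g h => by
      obtain ⟨t, ht, hhα⟩ := hα_smul (h : G)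
      rw [← ofAdd_add, Subgroup.coe_mul, mul_smul, hhα, smul_add, smul_mul', ht,
        (mem_ker _).1 g.2]
      ring_nf
  have hδ : Function.Injective δ := (injective_iff_map_eq_one δ).2 fun g hg =>
    Subtype.ext <| h_faithful g (sub_eq_zero.1 (Multiplicative.ofAdd.injective hg))
      ((mem_ker g).1 g.2)
  have : Group.IsSolvable χ.ker := Group.isSolvable_of_isSolvable_injective hδ
  exact Group.isSolvable_of_ker_le_range χ.ker.subtype χ (Subgroup.range_subtype _).ge

end AffineAction

theorem Polynomial.Gal.isSolvable_of_rootSet_eq_progression {K : Type*} [Field K] {f : K[X]}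
    {α c : f.SplittingField} (hc : c ≠ 0)
    (hroots : ∀ x, x ∈ f.rootSet f.SplittingField ↔ ∃ n : ℕ, x = α + n * c) :
    Group.IsSolvable f.Gal := by
  have root_image (σ : f.Gal) (n : ℕ) : ∃ m : ℕ, σ (α + n * c) = α + m * c :=
    (hroots _).1 (rootSet_mapsTo σ.toAlgHom ((hroots _).2 ⟨n, rfl⟩))
  have natCast_mem_fixedPoints (n : ℕ) : (n : f.SplittingField) ∈ MulAction.fixedPoints f.Gal _ :=
    fun σ => map_natCast σ n
  have natCast_sub_mem_fixedPoints (i j : ℕ) :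
      (j - i : f.SplittingField) ∈ MulAction.fixedPoints f.Gal _ :=
    fun σ => by rw [smul_sub, natCast_mem_fixedPoints j σ, natCast_mem_fixedPoints i σ]
  refine isSolvable_of_smul_eq_affine (α := α) hc (fun σ => ?_) (fun σ => ?_) fun σ hσα hσc => ?_
  · obtain ⟨i, hi⟩ := root_image σ 0
    obtain ⟨j, hj⟩ := root_image σ 1
    refine ⟨j - i, natCast_sub_mem_fixedPoints i j, ?_⟩
    simp only [Nat.cast_zero, Nat.cast_one, zero_mul, one_mul, add_zero, map_add] at hi hj
    change σ c = _
    linear_combination hj - hi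
  · obtain ⟨i, hi⟩ := root_image σ 0
    simp only [Nat.cast_zero, zero_mul, add_zero] at hi
    exact ⟨i, natCast_mem_fixedPoints i, hi⟩
  · refine Gal.ext (p := f) fun x hx => ?_
    obtain ⟨n, rfl⟩ := (hroots x).1 hx
    change σ α = α at hσα
    change σ c = c at hσc
    rw [map_add, map_mul, map_natCast, hσα, hσc]
    rfl

theorem exists_eq_add_natCast_mul_of_card_eq {L : Type*} [Field L] (p : ℕ) [CharP L p]
    {S : Set L} [Fintype S] (hcard : Fintype.card S = p) {α c : L} (hc : c ≠ 0)
    (hS : ∀ n : ℕ, α + n * c ∈ S) {x : L} (hx : x ∈ S) : ∃ n : ℕ, x = α + n * c := by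
  let progression : Fin p → S := fun i => ⟨α + (i : ℕ) * c, hS i⟩
  have injective : Function.Injective progression := fun i j hij => by
    have : ((i : ℕ) : L) = (j : ℕ) :=
      mul_right_cancel₀ hc (add_left_cancel (congrArg Subtype.val hij))
    exact Fin.ext (((CharP.natCast_eq_natCast L p).1 this).eq_of_lt_of_lt i.2 j.2)
  obtain ⟨i, hi⟩ := ((Fintype.bijective_iff_injective_and_card progression).2
    ⟨injective, by simp [hcard]⟩).surjective ⟨x, hx⟩
  exact ⟨i, (congrArg Subtype.val hi).symm⟩

section AdditivePolynomial

variable (R : Type*) [CommRing R] (p : ℕ) [ExpChar R p]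

def frobeniusAddMulLeft (a : R) : R →+ R :=
  (frobenius R p : R →+ R) + AddMonoidHom.mulLeft a

@[simp]
theorem frobeniusAddMulLeft_apply (a x : R) : frobeniusAddMulLeft R p a x = x ^ p + a * x := rfl

end AdditivePolynomial

section ArtinSchreierLike

variable {K : Type*} [Field K] (p : ℕ)

theorem natDegree_X_pow_add_C_mul_X_sub_C (hp : 1 < p) (a b : K) :
    (X ^ p + C a * X - C b : K[X]).natDegree = p := by
  compute_degree!
  all_goals simp [hp.ne', (zero_lt_one.trans hp).ne', hp.le]

theorem separable_X_pow_add_C_mul_X_sub_C [CharP K p] {a : K} (ha : a ≠ 0) (b : K) :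
    (X ^ p + C a * X - C b : K[X]).Separable := by
  simpa [sub_eq_add_neg] using
    separable_C_mul_X_pow_add_C_mul_X_add_C' p p 1 a (-b) dvd_rfl ha.isUnit

theorem aeval_X_pow_add_C_mul_X_sub_C {L : Type*} [CommRing L] [Algebra K L] [ExpChar L p]
    (a b : K) (x : L) :
    aeval x (X ^ p + C a * X - C b) =
      frobeniusAddMulLeft L p (algebraMap K L a) x - algebraMap K L b := by
  simp

variable [Fact p.Prime] [CharP K p]

theorem exists_rootSet_X_pow_add_C_mul_X_sub_C_eq_progression {L : Type*} [Field L] [Algebra K L]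
    {a : K} (ha : a ≠ 0) (b : K) (hsplit : Splits ((X ^ p + C a * X - C b).map (algebraMap K L))) :
    ∃ α c : L, c ≠ 0 ∧
      ∀ x, x ∈ (X ^ p + C a * X - C b).rootSet L ↔ ∃ n : ℕ, x = α + n * c := by
  have hp : p.Prime := Fact.out
  have : CharP L p := charP_of_injective_algebraMap (algebraMap K L).injective p
  have hsep := separable_X_pow_add_C_mul_X_sub_C p ha b
  have mem_rootSet (x : L) : x ∈ (X ^ p + C a * X - C b).rootSet L ↔
      frobeniusAddMulLeft L p (algebraMap K L a) x = algebraMap K L b := by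
    rw [mem_rootSet_of_ne hsep.ne_zero, aeval_X_pow_add_C_mul_X_sub_C, sub_eq_zero]
  have hcard : Fintype.card ((X ^ p + C a * X - C b).rootSet L) = p := by
    rw [card_rootSet_eq_natDegree hsep hsplit, natDegree_X_pow_add_C_mul_X_sub_C p hp.one_lt]
  obtain ⟨⟨α, hα⟩, ⟨β, hβ⟩, hne⟩ := Fintype.exists_pair_of_one_lt_card (hcard ▸ hp.one_lt)
  have hc : β - α ≠ 0 := sub_ne_zero.2 fun h => hne (Subtype.ext h.symm)
  have progression_mem (n : ℕ) : α + n * (β - α) ∈ (X ^ p + C a * X - C b).rootSet L := by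
    rw [mem_rootSet, map_add, ← nsmul_eq_mul, map_nsmul, map_sub, (mem_rootSet α).1 hα,
      (mem_rootSet β).1 hβ, sub_self, smul_zero, add_zero]
  refine ⟨α, β - α, hc, fun x => ⟨fun hx => ?_, ?_⟩⟩
  · exact exists_eq_add_natCast_mul_of_card_eq p hcard hc progression_mem hx
  · rintro ⟨n, rfl⟩
    exact progression_mem n

end ArtinSchreierLike

/-- Over a field `K` of prime characteristic `p`, the Galois group of the polynomial
`T^p + a T - b` (with `a ≠ 0`) is solvable. -/
theorem galois_group_of_artin_schreier_like_solvable
    {K : Type*} [Field K] (p : ℕ) [Fact p.Prime] [CharP K p]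
    (a b : K) (ha : a ≠ 0) :
    IsSolvable ((X ^ p + C a * X - C b : K[X]).Gal) := by
  obtain ⟨α, c, hc, hroots⟩ :=
    exists_rootSet_X_pow_add_C_mul_X_sub_C_eq_progression p ha b (SplittingField.splits _)
  exact Gal.isSolvable_of_rootSet_eq_progression hc hroots
end

section
/- Let R be an integral domain, 𝔭 a prime ideal of R, and S an integral domain that is a module-finite ring extension of the localization R_𝔭. Then there exists a domain T that is a module-finite ring extension of R such that the localization T_𝔭 (i.e., T localized at the multiplicative set R ∖ 𝔭) is isomorphic to S as an R_𝔭-algebra. -/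
/-!
Choose generators of `S` over `R_𝔭` and multiply each by an element of `R ∖ 𝔭` clearing the
denominators of an integral equation, so that the new generators are integral over `R`. The
`R`-algebra `T` they generate is then module-finite over `R`, and since the new generators
still span `S` over `R_𝔭`, every element of `S` becomes an element of `T` after multiplication
by some element of `R ∖ 𝔭`; this is exactly what makes `S` the localization of `T`.
-/

namespace Subalgebra

variable {R S : Type*} [CommRing R] [CommRing S] [Algebra R S]

theorem isLocalization_of_forall_exists_smul_mem (M : Submonoid R) (T : Subalgebra R S)
    (hunit : ∀ m ∈ M, IsUnit (algebraMap R S m)) (hmem : ∀ z : S, ∃ m ∈ M, m • z ∈ T) :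
    IsLocalization (M.map (algebraMap R T)) S where
  map_units := by
    rintro ⟨_, m, hm, rfl⟩
    simpa only [← IsScalarTower.algebraMap_apply] using hunit m hm
  surj z := by
    obtain ⟨m, hm, hmz⟩ := hmem z
    refine ⟨(⟨_, hmz⟩, ⟨algebraMap R T m, m, hm, rfl⟩), ?_⟩
    simp only [← IsScalarTower.algebraMap_apply, mul_comm z, ← Algebra.smul_def]
    rfl
  exists_of_eq h := ⟨1, congrArg _ (Subtype.ext h)⟩

end Subalgebra

theorem exists_smul_mem_span_of_span_eq_top {R K N : Type*} [CommRing R] [CommRing K]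
    [Algebra R K] [AddCommGroup N] [Module R N] [Module K N] [IsScalarTower R K N]
    (M : Submonoid R) [IsLocalization M K] {t : Set N} (ht : Submodule.span K t = ⊤) (z : N) :
    ∃ m ∈ M, m • z ∈ Submodule.span R t := by
  obtain ⟨y, hy, m, hz⟩ := (IsLocalization.mem_span_iff (S := K) M).1
    (ht.symm ▸ Submodule.mem_top : z ∈ Submodule.span K t)
  refine ⟨m, m.2, ?_⟩
  rwa [hz, ← algebraMap_smul K, smul_smul, mul_comm, IsLocalization.mk'_spec, map_one, one_smul]

section

variable {R K S : Type*} [CommRing R] [CommRing K] [CommRing S] [Algebra R K] [Algebra K S]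
  [Algebra R S] [IsScalarTower R K S]

theorem exists_finset_isIntegral_and_span_eq_top_of_isLocalization (M : Submonoid R)
    [IsLocalization M K] [Module.Finite K S] :
    ∃ t : Finset S, (∀ x ∈ t, IsIntegral R x) ∧ Submodule.span K (t : Set S) = ⊤ := by
  classical
  obtain ⟨s, hs⟩ := Module.Finite.fg_top (R := K) (M := S)
  choose m hm using fun x : S ↦
    (Algebra.IsIntegral.isIntegral (R := K) x).exists_multiple_integral_of_isLocalization M x
  refine ⟨s.image fun x ↦ m x • x, by simpa using fun x _ ↦ hm x, eq_top_iff.2 ?_⟩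
  rw [← hs, Submodule.span_le]
  intro x hx
  have hx' : x = IsLocalization.mk' K 1 (m x) • (m x • x) := by
    rw [Submonoid.smul_def, ← algebraMap_smul K (m x : R), smul_smul, IsLocalization.mk'_spec,
      map_one, one_smul]
  rw [hx']
  exact Submodule.smul_mem _ _ (Submodule.subset_span (Finset.mem_image_of_mem _ hx))

theorem exists_finite_subalgebra_isLocalization (M : Submonoid R) [IsLocalization M K]
    [Module.Finite K S] :
    ∃ T : Subalgebra R S, Module.Finite R T ∧ IsLocalization (M.map (algebraMap R T)) S := by
  obtain ⟨t, ht_int, ht_span⟩ := exists_finset_isIntegral_and_span_eq_top_of_isLocalization M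
    (K := K) (S := S)
  refine ⟨Algebra.adjoin R t, Algebra.finite_adjoin_of_finite_of_isIntegral t.finite_toSet ht_int,
    Subalgebra.isLocalization_of_forall_exists_smul_mem M _ (fun m hm ↦ ?_) fun z ↦ ?_⟩
  · rw [IsScalarTower.algebraMap_apply R K S]
    exact (IsLocalization.map_units K ⟨m, hm⟩).map _
  · obtain ⟨m, hm, hmz⟩ := exists_smul_mem_span_of_span_eq_top M ht_span z
    exact ⟨m, hm, Algebra.span_le_adjoin R _ hmz⟩

end

theorem unlocalize_module_finite_extension_general
    {R : Type*} [CommRing R] (𝔭 : Ideal R) [𝔭.IsPrime]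
    {S : Type*} [CommRing S]
    [Algebra R S] [Algebra (Localization.AtPrime 𝔭) S]
    [IsScalarTower R (Localization.AtPrime 𝔭) S]
    (hfin : Module.Finite (Localization.AtPrime 𝔭) S) :
    ∃ T : Subalgebra R S, Module.Finite R T ∧
      IsLocalization (Submonoid.map (algebraMap R T) 𝔭.primeCompl) S :=
  exists_finite_subalgebra_isLocalization (K := Localization.AtPrime 𝔭) 𝔭.primeCompl

/-- Given a domain `R`, a prime `𝔭`, and a domain `S` module-finite over the localization
`R_𝔭`, there is a domain `T` module-finite over `R` whose localization at `R ∖ 𝔭` is `S`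
(as an `R_𝔭`-algebra).  Here `T` is realized as an `R`-subalgebra of `S`, and the
conclusion that `T_𝔭 ≅ S` is expressed by saying that `S` is the localization of `T` at
the image of the multiplicative set `R ∖ 𝔭`. -/
theorem unlocalize_module_finite_extension
    {R : Type*} [CommRing R] [IsDomain R] (𝔭 : Ideal R) [𝔭.IsPrime]
    {S : Type*} [CommRing S] [IsDomain S]
    [Algebra R S] [Algebra (Localization.AtPrime 𝔭) S]
    [IsScalarTower R (Localization.AtPrime 𝔭) S]
    (hinj : Function.Injective (algebraMap (Localization.AtPrime 𝔭) S))
    (hfin : Module.Finite (Localization.AtPrime 𝔭) S) :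
    ∃ T : Subalgebra R S, Module.Finite R T ∧
      IsLocalization (Submonoid.map (algebraMap R T) 𝔭.primeCompl) S :=
  unlocalize_module_finite_extension_general 𝔭 hfin
end

section
/- Let R be an integral domain of prime characteristic p, let 𝔞 be an ideal of R, and suppose z ∈ R satisfies z^p ∈ 𝔞^{[p]}, say z^p = Σ_{i=0}^m b_i a_i^p with a_i ∈ 𝔞 nonzero and b_i ∈ R. Let t_1, …, t_m be roots of the polynomials T^p + a_0^p T − b_i (for i = 1, …, m) in an algebraic closure of frac(R), and set t_0 = (z − Σ_{i=1}^m t_i a_i)/a_0. Then t_0^p = b_0 + Σ_{i=1}^m t_i a_i^p; in particular t_0 is integral over R[t_1, …, t_m], and z = Σ_{i=0}^m t_i a_i lies in the ideal 𝔞·S for S = R[t_0, t_1, …, t_m]. -/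
set_option maxHeartbeats 1600000
set_option synthInstance.maxHeartbeats 400000


/-- The equational construction in Theorem main:ideal(1): if `z^p = Σ_{i=0}^m b_i a_i^p`
with `a_i ∈ 𝔞` nonzero, and `t_1, …, t_m` are roots of `T^p + a_0^p T - b_i` in an
algebraic closure `A` of `frac(R)`, then setting `t_0 = (z - Σ t_i a_{i}) / a_0` one has
`t_0^p = b_0 + Σ t_i a_i^p`, so `t_0` is integral over `R[t_1, …, t_m]`, and
`z = Σ_{i=0}^m t_i a_i` lies in `𝔞·S` for `S = R[t_0, …, t_m]`. -/
theorem equational_construction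
    {R : Type*} [CommRing R] [IsDomain R] (p : ℕ) [Fact p.Prime] [CharP R p]
    (𝔞 : Ideal R) (z : R) (m : ℕ) (a b : Fin (m + 1) → R)
    (ha : ∀ i, a i ∈ 𝔞) (ha0 : ∀ i, a i ≠ 0)
    (hz : z ^ p = ∑ i, b i * a i ^ p)
    (t : Fin m → AlgebraicClosure (FractionRing R))
    (ht : ∀ i : Fin m,
      t i ^ p + algebraMap R (AlgebraicClosure (FractionRing R)) (a 0) ^ p * t i -
        algebraMap R (AlgebraicClosure (FractionRing R)) (b i.succ) = 0)
    (t0 : AlgebraicClosure (FractionRing R))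
    (ht0 : t0 = (algebraMap R (AlgebraicClosure (FractionRing R)) z -
        ∑ i, t i * algebraMap R (AlgebraicClosure (FractionRing R)) (a i.succ)) /
      algebraMap R (AlgebraicClosure (FractionRing R)) (a 0)) :
    t0 ^ p = algebraMap R (AlgebraicClosure (FractionRing R)) (b 0) +
        ∑ i, t i * algebraMap R (AlgebraicClosure (FractionRing R)) (a i.succ) ^ p ∧
      IsIntegral (Algebra.adjoin R (Set.range t)) t0 ∧
      algebraMap R (AlgebraicClosure (FractionRing R)) z =
        algebraMap R (AlgebraicClosure (FractionRing R)) (a 0) * t0 +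
          ∑ i, t i * algebraMap R (AlgebraicClosure (FractionRing R)) (a i.succ) ∧
      ∃ h : algebraMap R (AlgebraicClosure (FractionRing R)) z ∈
          Algebra.adjoin R (insert t0 (Set.range t)),
        (⟨algebraMap R (AlgebraicClosure (FractionRing R)) z, h⟩ :
            Algebra.adjoin R (insert t0 (Set.range t))) ∈
          Ideal.map (algebraMap R (Algebra.adjoin R (insert t0 (Set.range t)))) 𝔞 := by
  set f := algebraMap R (AlgebraicClosure (FractionRing R)) with hf
  have hinj : Function.Injective f := by
    rw [hf, IsScalarTower.algebraMap_eq R (FractionRing R) (AlgebraicClosure (FractionRing R))]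
    exact (algebraMap (FractionRing R) (AlgebraicClosure (FractionRing R))).injective.comp (IsFractionRing.injective R _)
  haveI : CharP (AlgebraicClosure (FractionRing R)) p := charP_of_injective_algebraMap hinj p
  have ha0' : f (a 0) ≠ 0 := fun h => ha0 0 (hinj (by simpa using h))
  -- the linear relation
  have h3 : f z = f (a 0) * t0 + ∑ i, t i * f (a i.succ) := by
    rw [ht0, mul_div_cancel₀ _ ha0']; ring
  -- the p-th power relation
  have hc : f (a 0) ^ p * t0 ^ p =
      f (a 0) ^ p * (f (b 0) + ∑ i, t i * f (a i.succ) ^ p) := by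
    have h4 : f (a 0) * t0 = f z - ∑ i, t i * f (a i.succ) := by rw [h3]; ring
    calc f (a 0) ^ p * t0 ^ p = (f (a 0) * t0) ^ p := (mul_pow _ _ _).symm
      _ = (f z - ∑ i, t i * f (a i.succ)) ^ p := by rw [h4]
      _ = f z ^ p - ∑ i : Fin m, (t i * f (a i.succ)) ^ p := by
          rw [sub_pow_char, sum_pow_char]
      _ = f (b 0) * f (a 0) ^ p + ∑ i : Fin m, f (b i.succ) * f (a i.succ) ^ p
            - ∑ i : Fin m, t i ^ p * f (a i.succ) ^ p := by
          rw [← map_pow, hz, map_sum]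
          simp [mul_pow, map_mul, map_pow, Fin.sum_univ_succ]
      _ = f (b 0) * f (a 0) ^ p
            + ∑ i : Fin m, (f (b i.succ) - t i ^ p) * f (a i.succ) ^ p := by
          simp_rw [sub_mul]
          rw [Finset.sum_sub_distrib, add_sub_assoc]
      _ = f (b 0) * f (a 0) ^ p
            + ∑ i : Fin m, (f (a 0) ^ p * t i) * f (a i.succ) ^ p := by
          congr 1; apply Finset.sum_congr rfl; intro i _
          have := ht i
          have : f (b i.succ) - t i ^ p = f (a 0) ^ p * t i := by linear_combination -this
          rw [this]
      _ = f (a 0) ^ p * (f (b 0) + ∑ i : Fin m, t i * f (a i.succ) ^ p) := by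
          rw [mul_add, Finset.mul_sum]
          congr 1
          · ring
          · exact Finset.sum_congr rfl fun i _ => by ring
  have h1 : t0 ^ p = f (b 0) + ∑ i, t i * f (a i.succ) ^ p :=
    mul_left_cancel₀ (pow_ne_zero p ha0') hc
  refine ⟨h1, ?_, h3, ?_⟩
  · -- integrality
    set S0 := Algebra.adjoin R (Set.range t) with hS0
    have hcmem : f (b 0) + ∑ i, t i * f (a i.succ) ^ p ∈ S0 := by
      refine add_mem (Subalgebra.algebraMap_mem _ _) (sum_mem fun i _ => ?_)
      exact mul_mem (Algebra.subset_adjoin ⟨i, rfl⟩)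
        (pow_mem (Subalgebra.algebraMap_mem _ _) _)
    refine IsIntegral.of_pow (Fact.out : p.Prime).pos ?_
    rw [h1]
    exact isIntegral_algebraMap (x := (⟨_, hcmem⟩ : S0))
  · -- ideal membership
    set S := Algebra.adjoin R (insert t0 (Set.range t)) with hS
    have ht0S : t0 ∈ S := Algebra.subset_adjoin (Set.mem_insert _ _)
    have htS : ∀ i, t i ∈ S := fun i =>
      Algebra.subset_adjoin (Set.mem_insert_of_mem _ ⟨i, rfl⟩)
    have hzS : f z ∈ S := by
      rw [h3]
      exact add_mem (mul_mem (Subalgebra.algebraMap_mem _ _) ht0S)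
        (sum_mem fun i _ => mul_mem (htS i) (Subalgebra.algebraMap_mem _ _))
    refine ⟨hzS, ?_⟩
    have heq : (⟨f z, hzS⟩ : S) =
        (⟨t0, ht0S⟩ : S) * algebraMap R S (a 0) +
          ∑ i : Fin m, (⟨t i, htS i⟩ : S) * algebraMap R S (a i.succ) := by
      ext
      push_cast
      simp only [← hf]
      rw [h3]; ring
    rw [heq]
    refine add_mem (Ideal.mul_mem_left _ _ (Ideal.mem_map_of_mem _ (ha 0)))
      (Ideal.sum_mem _ fun i _ => Ideal.mul_mem_left _ _ (Ideal.mem_map_of_mem _ (ha i.succ)))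
end
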